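/- arXiv:1405.6349 — 2 statements merged into one kernel-verified Lean document; each statement's English description precedes it below -/
import Mathlib

section
/- Let L be a field, e ≥ 1, R = L[x]/(x^e), and M = R ⊕ R equipped with the R-bilinear symmetric pairing defined by ⟨(u₁,u₂),(v₁,v₂)⟩ = u₁v₂ − u₂v₁ viewed with values in R, composed with the L-linear functional taking the coefficient of x^{e−1}. Let 0 < a, b ≤ e and let W = x^a R ⊕ x^b R ⊆ M. Then the annihilator W^⊥ of W with respect to this pairing equals x^{e−b} R ⊕ x^{e−a} R. -/
open Polynomial

/-! Orthogonality of `m` to `x^a R ⊕ x^b R` splits into `coeffTop (m₁ · x^b R) = 0` and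
`coeffTop (m₂ · x^a R) = 0`. For the form `(u, v) ↦ coeffTop (u v)` on `L[x]/(x^e)`, the
orthogonal of the ideal `(x^n)` is `(x^(e-n))`: one inclusion is `x^e = 0`, and conversely,
pairing `v` with `x^(e-1-k)` reads off the `k`-th coefficient of `v`, which therefore vanishes
for every `k < e - n`. -/

/-- The truncated polynomial ring `L[x]/(x^e)`. -/
abbrev TruncPoly (L : Type*) [Field L] (e : ℕ) : Type _ := AdjoinRoot (X ^ e : L[X])

/-- The image of the variable `x` in `L[x]/(x^e)`. -/
noncomputable abbrev tx (L : Type*) [Field L] (e : ℕ) : TruncPoly L e := AdjoinRoot.root _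

/-- The `L`-linear functional on `L[x]/(x^e)` extracting the coefficient of `x^(e-1)`
(of the unique representative of degree `< e`). -/
noncomputable def coeffTop (L : Type*) [Field L] (e : ℕ) : TruncPoly L e →ₗ[L] L :=
  (Polynomial.lcoeff L (e - 1)).comp (AdjoinRoot.modByMonicHom (monic_X_pow e))

/-- The `L`-valued pairing `⟨(u₁,u₂),(v₁,v₂)⟩ = coeff_{x^(e-1)}(u₁v₂ − u₂v₁)`
on `M = R ⊕ R`, `R = L[x]/(x^e)`. -/
noncomputable def pairL (L : Type*) [Field L] (e : ℕ)
    (m m' : TruncPoly L e × TruncPoly L e) : L :=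
  coeffTop L e (m.1 * m'.2 - m.2 * m'.1)

theorem Polynomial.coeff_modByMonic_X_pow {R : Type*} [Ring R] {e i : ℕ} (hi : i < e)
    (p : R[X]) : (p %ₘ X ^ e).coeff i = p.coeff i := by
  conv_rhs => rw [← modByMonic_add_div p (X ^ e)]
  rw [coeff_add, coeff_X_pow_mul', if_neg (Nat.not_le_of_lt hi), add_zero]

theorem forall_mem_prod_map_sub_mul_eq_zero_iff {R K : Type*} [CommRing R] [AddCommGroup K]
    (φ : R →+ K) (I J : Ideal R) (m : R × R) :
    (∀ w ∈ Submodule.prod I J, φ (m.1 * w.2 - m.2 * w.1) = 0) ↔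
      (∀ j ∈ J, φ (m.1 * j) = 0) ∧ ∀ i ∈ I, φ (m.2 * i) = 0 := by
  constructor
  · intro h
    refine ⟨fun j hj ↦ ?_, fun i hi ↦ ?_⟩
    · simpa using h (0, j) ⟨I.zero_mem, hj⟩
    · simpa using h (i, 0) ⟨hi, J.zero_mem⟩
  · rintro ⟨hJ, hI⟩ w ⟨hw₁, hw₂⟩
    rw [map_sub, hJ _ hw₂, hI _ hw₁, sub_zero]

namespace TruncPoly

variable {L : Type*} [Field L] {e : ℕ}

theorem tx_pow_self : tx L e ^ e = 0 := by
  simpa using AdjoinRoot.eval₂_root (X ^ e : L[X])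

theorem coeffTop_mk (he : 0 < e) (p : L[X]) :
    coeffTop L e (AdjoinRoot.mk _ p) = p.coeff (e - 1) := by
  simp [coeffTop, AdjoinRoot.modByMonicHom_mk, coeff_modByMonic_X_pow (Nat.sub_lt he one_pos)]

theorem coeffTop_mk_mul_tx_pow {k : ℕ} (hk : k < e) (p : L[X]) :
    coeffTop L e (AdjoinRoot.mk _ p * tx L e ^ (e - 1 - k)) = p.coeff k := by
  rw [tx, ← AdjoinRoot.mk_X, ← map_pow, ← map_mul, coeffTop_mk (by omega), coeff_mul_X_pow',
    if_pos (by omega), show e - 1 - (e - 1 - k) = k by omega]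

theorem mk_mem_span_tx_pow_iff {n : ℕ} (hn : n ≤ e) (p : L[X]) :
    AdjoinRoot.mk _ p ∈ Ideal.span {tx L e ^ n} ↔ X ^ n ∣ p := by
  have hspan : Ideal.span {tx L e ^ n} = (Ideal.span {X ^ n}).map (AdjoinRoot.mk (X ^ e)) := by
    rw [Ideal.map_span, Set.image_singleton, map_pow, AdjoinRoot.mk_X]
  rw [hspan, ← Ideal.mem_span_singleton]
  exact Ideal.mem_quotient_iff_mem
    (Ideal.span_singleton_le_span_singleton.2 (pow_dvd_pow X hn))

theorem mem_span_tx_pow_sub_iff {n : ℕ} (hn : n ≤ e) (v : TruncPoly L e) :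
    v ∈ Ideal.span {tx L e ^ (e - n)} ↔
      ∀ j ∈ Ideal.span {tx L e ^ n}, coeffTop L e (v * j) = 0 := by
  constructor
  · rintro hv j hj
    obtain ⟨c, rfl⟩ := Ideal.mem_span_singleton'.1 hv
    obtain ⟨t, rfl⟩ := Ideal.mem_span_singleton'.1 hj
    rw [show c * tx L e ^ (e - n) * (t * tx L e ^ n) = c * t * tx L e ^ (e - n + n) by ring,
      Nat.sub_add_cancel hn, tx_pow_self, mul_zero, map_zero]
  · intro h
    obtain ⟨p, rfl⟩ := AdjoinRoot.mk_surjective v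
    rw [mk_mem_span_tx_pow_iff (Nat.sub_le e n), X_pow_dvd_iff]
    intro k hk
    rw [← coeffTop_mk_mul_tx_pow (e := e) (by omega)]
    exact h _ (Ideal.mem_span_singleton.2 (pow_dvd_pow _ (by omega)))

end TruncPoly

theorem annihilator_of_diagonal_submodule_general (L : Type*) [Field L] (e a b : ℕ)
    (ha' : a ≤ e) (hb' : b ≤ e) :
    {m : TruncPoly L e × TruncPoly L e |
        ∀ w ∈ (Submodule.prod (Ideal.span {tx L e ^ a}) (Ideal.span {tx L e ^ b}) :
          Submodule (TruncPoly L e) (TruncPoly L e × TruncPoly L e)), pairL L e m w = 0}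
      = (Submodule.prod (Ideal.span {tx L e ^ (e - b)}) (Ideal.span {tx L e ^ (e - a)}) :
          Submodule (TruncPoly L e) (TruncPoly L e × TruncPoly L e)) := by
  ext m
  rw [Set.mem_ofPred_eq, SetLike.mem_coe, Submodule.mem_prod,
    TruncPoly.mem_span_tx_pow_sub_iff hb', TruncPoly.mem_span_tx_pow_sub_iff ha']
  exact forall_mem_prod_map_sub_mul_eq_zero_iff (coeffTop L e).toAddMonoidHom _ _ m

/-- For `W = x^a R ⊕ x^b R ⊆ R ⊕ R` with `0 < a, b ≤ e`, the annihilator of `W`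
under the pairing is `x^(e-b) R ⊕ x^(e-a) R`. -/
theorem annihilator_of_diagonal_submodule (L : Type*) [Field L] (e a b : ℕ)
    (he : 1 ≤ e) (ha : 0 < a) (ha' : a ≤ e) (hb : 0 < b) (hb' : b ≤ e) :
    {m : TruncPoly L e × TruncPoly L e |
        ∀ w ∈ (Submodule.prod (Ideal.span {tx L e ^ a}) (Ideal.span {tx L e ^ b}) :
          Submodule (TruncPoly L e) (TruncPoly L e × TruncPoly L e)), pairL L e m w = 0}
      = (Submodule.prod (Ideal.span {tx L e ^ (e - b)}) (Ideal.span {tx L e ^ (e - a)}) :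
          Submodule (TruncPoly L e) (TruncPoly L e × TruncPoly L e)) :=
  annihilator_of_diagonal_submodule_general L e a b ha' hb'
end

section
/- Let L be a field, e ≥ 1, R = L[x]/(x^e), M = R ⊕ R with the pairing of the previous context, and let W = x^a R ⊕ x^b R with 0 < a, b ≤ e and a + b > e. Then W ⊆ W^⊥, and the x-torsion of the quotient module W^⊥/W, namely {z ∈ W^⊥/W : x·z = 0}, is a 2-dimensional L-vector space, isomorphic to (x^{a−1}R/x^a R) ⊕ (x^{b−1}R/x^b R). -/
open Polynomial

/-- Multiplication by `x`, as an `L`-linear map on a module over `L[x]/(x^e)`. -/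
noncomputable def smulRootMap (L : Type*) [Field L] (e : ℕ) (Q : Type*) [AddCommGroup Q]
    [Module (TruncPoly L e) Q] [Module L Q] [IsScalarTower L (TruncPoly L e) Q] : Q →ₗ[L] Q where
  toFun q := tx L e • q
  map_add' := smul_add _
  map_smul' c q := by
    show tx L e • c • q = c • tx L e • q
    rw [algebra_compatible_smul (TruncPoly L e) c q,
      algebra_compatible_smul (TruncPoly L e) c (tx L e • q), smul_smul, smul_smul, mul_comm]

/-- The submodule `x^a R ⊕ x^b R` of `R ⊕ R`. -/
noncomputable abbrev Wdiag (L : Type*) [Field L] (e a b : ℕ) :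
    Submodule (TruncPoly L e) (TruncPoly L e × TruncPoly L e) :=
  Submodule.prod (Ideal.span {tx L e ^ a}) (Ideal.span {tx L e ^ b})

/-- The quotient module `x^c R / x^(c+1) R`. -/
noncomputable abbrev quotT (L : Type*) [Field L] (e c : ℕ) : Type _ :=
  ↥(Ideal.span {tx L e ^ c} : Ideal (TruncPoly L e)) ⧸
    (Submodule.comap (Ideal.span {tx L e ^ c} : Ideal (TruncPoly L e)).subtype
      (Ideal.span {tx L e ^ (c + 1)}))

section Aux
variable (L : Type*) [Field L] (e : ℕ)

lemma tx_pow_mk (c : ℕ) : tx L e ^ c = AdjoinRoot.mk _ (X ^ c : L[X]) := by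
  rw [show tx L e = AdjoinRoot.mk _ (X : L[X]) from AdjoinRoot.mk_X.symm, ← map_pow]

lemma tx_pow_e : tx L e ^ e = 0 := by
  rw [tx_pow_mk, AdjoinRoot.mk_self]

lemma mem_span_pow_iff {c : ℕ} (hc : c ≤ e) (z : TruncPoly L e) :
    z ∈ Ideal.span {tx L e ^ c} ↔ tx L e ^ (e - c) * z = 0 := by
  rw [Ideal.mem_span_singleton]
  constructor
  · rintro ⟨u, rfl⟩
    rw [← mul_assoc, ← pow_add]
    rw [Nat.sub_add_cancel hc, tx_pow_e, zero_mul]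
  · intro h
    obtain ⟨p, rfl⟩ := AdjoinRoot.mk_surjective z
    rw [tx_pow_mk, ← map_mul, AdjoinRoot.mk_eq_zero] at h
    have hx : (X : L[X]) ^ c ∣ p := by
      have h2 : (X : L[X]) ^ (e - c) * X ^ c ∣ X ^ (e - c) * p := by
        rwa [← pow_add, Nat.sub_add_cancel hc]
      exact (mul_dvd_mul_iff_left (pow_ne_zero _ (X_ne_zero (R := L)))).mp h2
    obtain ⟨q, rfl⟩ := hx
    exact ⟨AdjoinRoot.mk _ q, by rw [tx_pow_mk, ← map_mul]⟩

lemma tx_pow_ne_zero {c : ℕ} (hc : c < e) : tx L e ^ c ≠ 0 := by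
  rw [tx_pow_mk, Ne, AdjoinRoot.mk_eq_zero, X_pow_dvd_iff]
  intro h
  have := h c hc
  simp at this

lemma coeffTop_mk (f : L[X]) :
    coeffTop L e (AdjoinRoot.mk _ f) = (f %ₘ X ^ e).coeff (e - 1) := by
  simp [coeffTop, AdjoinRoot.modByMonicHom_mk]

lemma coeffTop_nondeg (he : 1 ≤ e) {z : TruncPoly L e}
    (h : ∀ t : TruncPoly L e, coeffTop L e (z * t) = 0) : z = 0 := by
  by_contra hz
  obtain ⟨q, rfl⟩ := AdjoinRoot.mk_surjective z
  set p := q %ₘ X ^ e with hp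
  have hmkp : AdjoinRoot.mk _ p = AdjoinRoot.mk (X ^ e : L[X]) q := by
    have := AdjoinRoot.mk_leftInverse (monic_X_pow e) (AdjoinRoot.mk (X ^ e : L[X]) q)
    rwa [AdjoinRoot.modByMonicHom_mk, ← hp] at this
  have hpne : p ≠ 0 := fun h0 => hz (by rw [← hmkp, h0, map_zero])
  have hdeg : p.degree < (e : ℕ) := by
    simpa using degree_modByMonic_lt q (monic_X_pow e)
  set k := p.natDegree with hk
  have hke : k < e := (natDegree_lt_iff_degree_lt hpne).mpr (by simpa using hdeg)
  have := h (tx L e ^ (e - 1 - k))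
  rw [← hmkp, tx_pow_mk, ← map_mul, coeffTop_mk] at this
  have hdeg2 : (p * X ^ (e - 1 - k)).degree < ((X : L[X]) ^ e).degree := by
    rw [degree_X_pow, degree_mul, Polynomial.degree_eq_natDegree hpne, degree_X_pow, ← hk]
    exact_mod_cast (by omega : k + (e - 1 - k) < e)
  rw [(modByMonic_eq_self_iff (monic_X_pow e)).mpr hdeg2] at this
  have hc := coeff_mul_X_pow p (e - 1 - k) k
  rw [show k + (e - 1 - k) = e - 1 by omega, this] at hc
  exact hpne (leadingCoeff_eq_zero.mp hc.symm)

lemma ann_eq (a b : ℕ) (he : 1 ≤ e) (ha : 0 < a) (ha' : a ≤ e) (hb : 0 < b) (hb' : b ≤ e)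
    (hab : e < a + b) :
    ((Wdiag L e (e - b) (e - a) : Set (TruncPoly L e × TruncPoly L e)) =
        {m | ∀ w ∈ Wdiag L e a b, pairL L e m w = 0}) := by
  ext m
  simp only [SetLike.mem_coe, Submodule.mem_prod, Set.mem_setOf_eq]
  constructor
  · rintro ⟨h1, h2⟩ w ⟨hw1, hw2⟩
    obtain ⟨u, hu⟩ := Ideal.mem_span_singleton.mp h1
    obtain ⟨v, hv⟩ := Ideal.mem_span_singleton.mp h2
    obtain ⟨s, hs⟩ := Ideal.mem_span_singleton.mp hw1
    obtain ⟨t, ht⟩ := Ideal.mem_span_singleton.mp hw2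
    have e1 : m.1 * w.2 = 0 := by
      rw [hu, ht, mul_mul_mul_comm, ← pow_add, show e - b + b = e by omega, tx_pow_e, zero_mul]
    have e2 : m.2 * w.1 = 0 := by
      rw [hv, hs, mul_mul_mul_comm, ← pow_add, show e - a + a = e by omega, tx_pow_e, zero_mul]
    simp [pairL, e1, e2]
  · intro h
    constructor
    · rw [mem_span_pow_iff L e (by omega) m.1, show e - (e - b) = b by omega]
      apply coeffTop_nondeg L e he
      intro t
      have := h (0, tx L e ^ b * t)
        ⟨by simp, Ideal.mem_span_singleton.mpr ⟨t, rfl⟩⟩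
      simpa [pairL, mul_comm, mul_assoc, mul_left_comm] using this
    · rw [mem_span_pow_iff L e (by omega) m.2, show e - (e - a) = a by omega]
      apply coeffTop_nondeg L e he
      intro t
      have := h (tx L e ^ a * t, 0)
        ⟨Ideal.mem_span_singleton.mpr ⟨t, rfl⟩, by simp⟩
      simpa [pairL, mul_comm, mul_assoc, mul_left_comm] using this

lemma W_le (a b : ℕ) (ha' : a ≤ e) (hb' : b ≤ e) (hab : e < a + b) :
    Wdiag L e a b ≤ Wdiag L e (e - b) (e - a) := by
  apply Submodule.prod_mono <;>
    rw [Ideal.span_singleton_le_span_singleton] <;>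
    exact pow_dvd_pow _ (by omega)

lemma const_plus_x_mul (u : TruncPoly L e) :
    ∃ (c₀ : L) (u' : TruncPoly L e), u = algebraMap L _ c₀ + tx L e * u' := by
  obtain ⟨p, rfl⟩ := AdjoinRoot.mk_surjective u
  refine ⟨p.coeff 0, AdjoinRoot.mk _ p.divX, ?_⟩
  rw [show tx L e = AdjoinRoot.mk _ (X : L[X]) from AdjoinRoot.mk_X.symm, ← map_mul,
    show (algebraMap L (TruncPoly L e)) (p.coeff 0) = AdjoinRoot.mk _ (C (p.coeff 0)) from rfl,
    ← map_add]
  congr 1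
  rw [add_comm]
  exact (X_mul_divX_add p).symm

set_option synthInstance.maxHeartbeats 1000000 in
lemma finrank_quotT (c : ℕ) (hc : c < e) : Module.finrank L (quotT L e c) = 1 := by
  have hmem : tx L e ^ c ∈ (Ideal.span {tx L e ^ c} : Ideal (TruncPoly L e)) :=
    Ideal.subset_span rfl
  set v : quotT L e c := Submodule.Quotient.mk ⟨tx L e ^ c, hmem⟩ with hv
  apply finrank_eq_one v
  · intro h0
    rw [hv, Submodule.Quotient.mk_eq_zero] at h0
    have : tx L e ^ c ∈ (Ideal.span {tx L e ^ (c+1)} : Ideal (TruncPoly L e)) := h0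
    rw [mem_span_pow_iff L e (by omega)] at this
    rw [← pow_add, show e - (c+1) + c = e - 1 by omega] at this
    exact tx_pow_ne_zero L e (by omega) this
  · intro w
    obtain ⟨⟨z, hz⟩, rfl⟩ := Submodule.Quotient.mk_surjective _ w
    obtain ⟨u, hu⟩ := Ideal.mem_span_singleton.mp hz
    obtain ⟨c₀, u', hu'⟩ := const_plus_x_mul L e u
    refine ⟨c₀, ?_⟩
    rw [hv, ← Submodule.Quotient.mk_smul, Submodule.Quotient.eq]
    show (c₀ • (⟨tx L e ^ c, hmem⟩ : (Ideal.span {tx L e ^ c} : Ideal (TruncPoly L e)))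
      - ⟨z, hz⟩).1 ∈ (Ideal.span {tx L e ^ (c+1)} : Ideal (TruncPoly L e))
    have : (c₀ • (⟨tx L e ^ c, hmem⟩ : (Ideal.span {tx L e ^ c} : Ideal (TruncPoly L e)))
        - ⟨z, hz⟩).1 = c₀ • tx L e ^ c - z := rfl
    rw [this, hu, hu']
    have heq : c₀ • tx L e ^ c - tx L e ^ c * (algebraMap L (TruncPoly L e) c₀ + tx L e * u')
        = tx L e ^ (c + 1) * (-u') := by
      rw [Algebra.smul_def]; ring
    rw [heq]
    exact Ideal.mem_span_singleton.mpr ⟨-u', rfl⟩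

lemma x_mul_mem {c : ℕ} (hc : 1 ≤ c) {z : TruncPoly L e}
    (hz : z ∈ Ideal.span {tx L e ^ (c - 1)}) : tx L e * z ∈ Ideal.span {tx L e ^ c} := by
  obtain ⟨t, rfl⟩ := Ideal.mem_span_singleton.mp hz
  refine Ideal.mem_span_singleton.mpr ⟨t, ?_⟩
  rw [← mul_assoc, ← pow_succ', show c - 1 + 1 = c by omega]

lemma x_mul_mem' {c : ℕ} (hc : 1 ≤ c) (hc' : c ≤ e) {z : TruncPoly L e}
    (hz : tx L e * z ∈ Ideal.span {tx L e ^ c}) : z ∈ Ideal.span {tx L e ^ (c - 1)} := by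
  rw [mem_span_pow_iff L e hc'] at hz
  rw [mem_span_pow_iff L e (by omega)]
  rw [← mul_assoc, mul_comm _ (tx L e), ← pow_succ'] at hz
  rwa [show e - (c - 1) = e - c + 1 by omega]

section Main
variable (a b : ℕ)

noncomputable def incl1 (h1 : e - b ≤ a - 1) :
    (Ideal.span {tx L e ^ (a - 1)} : Ideal (TruncPoly L e)) →ₗ[TruncPoly L e]
      ↥(Wdiag L e (e - b) (e - a)) :=
  LinearMap.codRestrict _ ((LinearMap.inl _ _ _).comp (Submodule.subtype _))
    (fun u => Submodule.mem_prod.mpr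
      ⟨Ideal.span_singleton_le_span_singleton.mpr (pow_dvd_pow _ h1) u.2,
       Submodule.zero_mem _⟩)

noncomputable def incl2 (h1 : e - a ≤ b - 1) :
    (Ideal.span {tx L e ^ (b - 1)} : Ideal (TruncPoly L e)) →ₗ[TruncPoly L e]
      ↥(Wdiag L e (e - b) (e - a)) :=
  LinearMap.codRestrict _ ((LinearMap.inr _ _ _).comp (Submodule.subtype _))
    (fun u => Submodule.mem_prod.mpr
      ⟨Submodule.zero_mem _,
       Ideal.span_singleton_le_span_singleton.mpr (pow_dvd_pow _ h1) u.2⟩)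

noncomputable def psi1 (h1 : e - b ≤ a - 1) (h2 : a - 1 + 1 = a) :
    quotT L e (a - 1) →ₗ[TruncPoly L e]
      (↥(Wdiag L e (e - b) (e - a)) ⧸
        ((Wdiag L e a b).comap (Wdiag L e (e - b) (e - a)).subtype)) :=
  Submodule.liftQ _
    (((Wdiag L e a b).comap (Wdiag L e (e - b) (e - a)).subtype).mkQ.comp (incl1 L e a b h1))
    (by
      intro u hu
      simp only [LinearMap.mem_ker, LinearMap.comp_apply, Submodule.mkQ_apply,
        Submodule.Quotient.mk_eq_zero, Submodule.mem_comap]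
      refine Submodule.mem_prod.mpr ⟨?_, Submodule.zero_mem _⟩
      have : u.1 ∈ Ideal.span {tx L e ^ (a - 1 + 1)} := hu
      rwa [h2] at this)

noncomputable def psi2 (h1 : e - a ≤ b - 1) (h2 : b - 1 + 1 = b) :
    quotT L e (b - 1) →ₗ[TruncPoly L e]
      (↥(Wdiag L e (e - b) (e - a)) ⧸
        ((Wdiag L e a b).comap (Wdiag L e (e - b) (e - a)).subtype)) :=
  Submodule.liftQ _
    (((Wdiag L e a b).comap (Wdiag L e (e - b) (e - a)).subtype).mkQ.comp (incl2 L e a b h1))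
    (by
      intro u hu
      simp only [LinearMap.mem_ker, LinearMap.comp_apply, Submodule.mkQ_apply,
        Submodule.Quotient.mk_eq_zero, Submodule.mem_comap]
      refine Submodule.mem_prod.mpr ⟨Submodule.zero_mem _, ?_⟩
      have : u.1 ∈ Ideal.span {tx L e ^ (b - 1 + 1)} := hu
      rwa [h2] at this)

noncomputable def psi (h1 : e - b ≤ a - 1) (h1' : e - a ≤ b - 1)
    (h2 : a - 1 + 1 = a) (h2' : b - 1 + 1 = b) :
    (quotT L e (a - 1) × quotT L e (b - 1)) →ₗ[TruncPoly L e]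
      (↥(Wdiag L e (e - b) (e - a)) ⧸
        ((Wdiag L e a b).comap (Wdiag L e (e - b) (e - a)).subtype)) :=
  (psi1 L e a b h1 h2).coprod (psi2 L e a b h1' h2')

lemma psi_apply_mk (h1 : e - b ≤ a - 1) (h1' : e - a ≤ b - 1)
    (h2 : a - 1 + 1 = a) (h2' : b - 1 + 1 = b)
    (u : (Ideal.span {tx L e ^ (a - 1)} : Ideal (TruncPoly L e)))
    (v : (Ideal.span {tx L e ^ (b - 1)} : Ideal (TruncPoly L e)))
    (hm : ((u : TruncPoly L e), (v : TruncPoly L e)) ∈ Wdiag L e (e - b) (e - a)) :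
    psi L e a b h1 h1' h2 h2' (Submodule.Quotient.mk u, Submodule.Quotient.mk v) =
      Submodule.Quotient.mk ⟨((u : TruncPoly L e), (v : TruncPoly L e)), hm⟩ := by
  show psi1 L e a b h1 h2 (Submodule.Quotient.mk u)
      + psi2 L e a b h1' h2' (Submodule.Quotient.mk v) = _
  rw [psi1, psi2, Submodule.liftQ_apply, Submodule.liftQ_apply]
  simp only [LinearMap.comp_apply, Submodule.mkQ_apply]
  rw [← Submodule.Quotient.mk_add]
  congr 1
  apply Subtype.ext
  show ((u : TruncPoly L e), (0 : TruncPoly L e)) + ((0 : TruncPoly L e), (v : TruncPoly L e))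
    = ((u : TruncPoly L e), (v : TruncPoly L e))
  simp

lemma pair_mem_Wp (h1 : e - b ≤ a - 1) (h1' : e - a ≤ b - 1)
    (u : (Ideal.span {tx L e ^ (a - 1)} : Ideal (TruncPoly L e)))
    (v : (Ideal.span {tx L e ^ (b - 1)} : Ideal (TruncPoly L e))) :
    ((u : TruncPoly L e), (v : TruncPoly L e)) ∈ Wdiag L e (e - b) (e - a) :=
  Submodule.mem_prod.mpr
    ⟨Ideal.span_singleton_le_span_singleton.mpr (pow_dvd_pow _ h1) u.2,
     Ideal.span_singleton_le_span_singleton.mpr (pow_dvd_pow _ h1') v.2⟩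

lemma psi_inj (h1 : e - b ≤ a - 1) (h1' : e - a ≤ b - 1)
    (h2 : a - 1 + 1 = a) (h2' : b - 1 + 1 = b) :
    Function.Injective (psi L e a b h1 h1' h2 h2') := by
  rw [← LinearMap.ker_eq_bot]
  apply LinearMap.ker_eq_bot'.mpr
  rintro ⟨y1, y2⟩ hm
  obtain ⟨u, rfl⟩ := Submodule.Quotient.mk_surjective _ y1
  obtain ⟨v, rfl⟩ := Submodule.Quotient.mk_surjective _ y2
  rw [psi_apply_mk L e a b h1 h1' h2 h2' u v (pair_mem_Wp L e a b h1 h1' u v),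
    Submodule.Quotient.mk_eq_zero] at hm
  have hm' : ((u : TruncPoly L e), (v : TruncPoly L e)) ∈ Wdiag L e a b := hm
  obtain ⟨hma, hmb⟩ := Submodule.mem_prod.mp hm'
  have e1 : (Submodule.Quotient.mk u : quotT L e (a - 1)) = 0 := by
    rw [Submodule.Quotient.mk_eq_zero]
    show (u : TruncPoly L e) ∈ Ideal.span {tx L e ^ (a - 1 + 1)}
    rwa [h2]
  have e2 : (Submodule.Quotient.mk v : quotT L e (b - 1)) = 0 := by
    rw [Submodule.Quotient.mk_eq_zero]
    show (v : TruncPoly L e) ∈ Ideal.span {tx L e ^ (b - 1 + 1)}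
    rwa [h2']
  rw [Prod.mk.injEq]
  exact ⟨e1, e2⟩

set_option maxHeartbeats 2000000 in
lemma psi_range (ha : 0 < a) (ha' : a ≤ e) (hb : 0 < b) (hb' : b ≤ e)
    (h1 : e - b ≤ a - 1) (h1' : e - a ≤ b - 1)
    (h2 : a - 1 + 1 = a) (h2' : b - 1 + 1 = b) :
    LinearMap.range ((psi L e a b h1 h1' h2 h2').restrictScalars L) =
      LinearMap.ker (smulRootMap L e
        (↥(Wdiag L e (e - b) (e - a)) ⧸
          ((Wdiag L e a b).comap (Wdiag L e (e - b) (e - a)).subtype))) := by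
  ext z
  rw [LinearMap.mem_range, LinearMap.mem_ker]
  constructor
  · rintro ⟨⟨y1, y2⟩, rfl⟩
    obtain ⟨u, rfl⟩ := Submodule.Quotient.mk_surjective _ y1
    obtain ⟨v, rfl⟩ := Submodule.Quotient.mk_surjective _ y2
    show tx L e • (psi L e a b h1 h1' h2 h2' (Submodule.Quotient.mk u, Submodule.Quotient.mk v))
      = 0
    rw [psi_apply_mk L e a b h1 h1' h2 h2' u v (pair_mem_Wp L e a b h1 h1' u v),
      ← Submodule.Quotient.mk_smul, Submodule.Quotient.mk_eq_zero]
    show (tx L e • (((u : TruncPoly L e), (v : TruncPoly L e)) : TruncPoly L e × TruncPoly L e))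
      ∈ Wdiag L e a b
    refine Submodule.mem_prod.mpr ⟨?_, ?_⟩
    · show tx L e * (u : TruncPoly L e) ∈ _
      exact x_mul_mem L e (by omega) u.2
    · show tx L e * (v : TruncPoly L e) ∈ _
      exact x_mul_mem L e (by omega) v.2
  · intro hz
    obtain ⟨w, rfl⟩ := Submodule.Quotient.mk_surjective _ z
    replace hz : tx L e • (Submodule.Quotient.mk w :
        ↥(Wdiag L e (e - b) (e - a)) ⧸
          ((Wdiag L e a b).comap (Wdiag L e (e - b) (e - a)).subtype)) = 0 := hz
    rw [← Submodule.Quotient.mk_smul, Submodule.Quotient.mk_eq_zero] at hz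
    have hz'' : (tx L e • (w : TruncPoly L e × TruncPoly L e)) ∈ Wdiag L e a b := by
      rw [Submodule.mem_comap] at hz
      simpa only [Submodule.coe_subtype, SetLike.val_smul] using hz
    obtain ⟨hza, hzb⟩ := Submodule.mem_prod.mp hz''
    have hwa : (w : TruncPoly L e × TruncPoly L e).1 ∈ Ideal.span {tx L e ^ (a - 1)} :=
      x_mul_mem' L e ha ha' hza
    have hwb : (w : TruncPoly L e × TruncPoly L e).2 ∈ Ideal.span {tx L e ^ (b - 1)} :=
      x_mul_mem' L e hb hb' hzb
    refine ⟨(Submodule.Quotient.mk ⟨_, hwa⟩, Submodule.Quotient.mk ⟨_, hwb⟩), ?_⟩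
    show psi L e a b h1 h1' h2 h2' _ = _
    rw [psi_apply_mk L e a b h1 h1' h2 h2' ⟨_, hwa⟩ ⟨_, hwb⟩
      (pair_mem_Wp L e a b h1 h1' ⟨_, hwa⟩ ⟨_, hwb⟩)]

end Main


end Aux

set_option maxHeartbeats 2000000 in
/-- With `W = x^a R ⊕ x^b R`, `0 < a, b ≤ e`, `a + b > e`: `W ⊆ W^⊥`, where
`W^⊥ = x^(e-b) R ⊕ x^(e-a) R` is the annihilator of `W` under the pairing, and the
`x`-torsion of `W^⊥/W` is 2-dimensional over `L`, isomorphic to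
`(x^(a-1)R/x^a R) ⊕ (x^(b-1)R/x^b R)`. -/
theorem xTorsion_of_isotropic_quotient (L : Type*) [Field L] (e a b : ℕ)
    (he : 1 ≤ e) (ha : 0 < a) (ha' : a ≤ e) (hb : 0 < b) (hb' : b ≤ e) (hab : e < a + b) :
    ((Wdiag L e (e - b) (e - a) : Set (TruncPoly L e × TruncPoly L e)) =
        {m | ∀ w ∈ Wdiag L e a b, pairL L e m w = 0}) ∧
    Wdiag L e a b ≤ Wdiag L e (e - b) (e - a) ∧
    Module.finrank L (LinearMap.ker (smulRootMap L e
        (↥(Wdiag L e (e - b) (e - a)) ⧸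
          ((Wdiag L e a b).comap (Wdiag L e (e - b) (e - a)).subtype)))) = 2 ∧
    Nonempty ((LinearMap.ker (smulRootMap L e
        (↥(Wdiag L e (e - b) (e - a)) ⧸
          ((Wdiag L e a b).comap (Wdiag L e (e - b) (e - a)).subtype))))
      ≃ₗ[L] (quotT L e (a - 1) × quotT L e (b - 1))) := by
  have h1 : e - b ≤ a - 1 := by omega
  have h1' : e - a ≤ b - 1 := by omega
  have h2 : a - 1 + 1 = a := by omega
  have h2' : b - 1 + 1 = b := by omega
  set psiL := (psi L e a b h1 h1' h2 h2').restrictScalars L with hpsiL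
  have hinjL : Function.Injective psiL := psi_inj L e a b h1 h1' h2 h2'
  have hr := psi_range L e a b ha ha' hb hb' h1 h1' h2 h2'
  rw [← hpsiL] at hr
  have E := ((LinearEquiv.ofInjective psiL hinjL).trans (LinearEquiv.ofEq _ _ hr)).symm
  have f1 : Module.finrank L (quotT L e (a - 1)) = 1 := finrank_quotT L e _ (by omega)
  have f2 : Module.finrank L (quotT L e (b - 1)) = 1 := finrank_quotT L e _ (by omega)
  have : FiniteDimensional L (quotT L e (a - 1)) := FiniteDimensional.of_finrank_eq_succ f1
  have : FiniteDimensional L (quotT L e (b - 1)) := FiniteDimensional.of_finrank_eq_succ f2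
  refine ⟨ann_eq L e a b he ha ha' hb hb' hab, W_le L e a b ha' hb' hab, ?_, ⟨E⟩⟩
  rw [E.finrank_eq, Module.finrank_prod, f1, f2]
end
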